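/- The Coxeter group of type E₈ admits a presentation with three generators σ₁, σ, ω and relations: σ₁σⁱσ₁σ⁻ⁱ = σⁱσ₁σ⁻ⁱσ₁ for i = 2, 3, 4; σ⁸ = (σσ₁)⁷; ωσⁱσ₁σ⁻ⁱ = σⁱσ₁σ⁻ⁱω for i = 0, 1, 3, 4, 5, 6; ωσ²σ₁σ⁻²ω = σ²σ₁σ⁻²ωσ²σ₁σ⁻²; σ₁² = 1; ω² = 1. -/

import Mathlib

/-!
Send `σ₁ ↦ s₁`, `σ ↦ c = s₁s₂⋯s₇`, `ω ↦ t`. Conjugation by `c` shifts the chain,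
`c sᵢ c⁻¹ = sᵢ₊₁`, so `σⁱσ₁σ⁻ⁱ ↦ sᵢ₊₁` and the relations among `σ₁`, `ω` and these conjugates
become Coxeter relations of `E₈`. Both directions rest on the identity
`(∏_{j<n} cʲ x c⁻ʲ) · cⁿ = (x c)ⁿ`: in `E₈` it gives `c⁸ = (s₁ c)⁷`, and in the three-generator
group it turns `σ⁸ = (σσ₁)⁷` into `σ = u₀u₁⋯u₆` with `uᵢ = σⁱσ₁σ⁻ⁱ`, so that `sᵢ₊₁ ↦ uᵢ` is an
inverse. The same relation makes `σ⁸` commute with `σ₁`, so `uᵢ₊₈ = uᵢ` and commutation at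
distance 5 and 6 follows from distance 3 and 2; finally `u₁u₀u₁R = u₁σ = σu₀ = u₀u₁u₀R` with
`R = u₂⋯u₆` gives the braid relation between `u₀` and `u₁`.
-/

namespace CoxeterE8

open FreeGroup in
/-- Relators of the standard Coxeter presentation of type `E₈`: `Sum.inl i` is `s_{i+1}`
(`i : Fin 7`, the chain), `Sum.inr ()` is `t`, attached to the third node `s₃`.
All generators are involutions. -/
inductive IsCoxE8Rel : FreeGroup (Fin 7 ⊕ Unit) → Prop
  | sq (i : Fin 7) : IsCoxE8Rel ((of (.inl i)) ^ 2)
  | t_sq : IsCoxE8Rel ((of (.inr ()) : FreeGroup (Fin 7 ⊕ Unit)) ^ 2)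
  | comm_ss (i j : Fin 7) (h : (i : ℕ) + 1 < j) :
      IsCoxE8Rel ((of (.inl i) * of (.inl j)) ^ 2)
  | braid_s (i : ℕ) (h : i + 1 < 7) :
      IsCoxE8Rel ((of (.inl ⟨i, by omega⟩) * of (.inl ⟨i + 1, h⟩)) ^ 3)
  | comm_t (i : Fin 7) (h : (i : ℕ) ≠ 2) :
      IsCoxE8Rel ((of (.inr ()) * of (.inl i)) ^ 2)
  | braid_t : IsCoxE8Rel ((of (.inr ()) * of (.inl 2)) ^ 3)

open FreeGroup in
/-- Relators of the three-generator presentation of the Coxeter group of type `E₈`: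
generator `0` is `σ₁`, generator `1` is `σ`, generator `2` is `ω`. -/
inductive IsCoxE8ThreeRel : FreeGroup (Fin 3) → Prop
  | r₁ (i : ℕ) (h : i = 2 ∨ i = 3 ∨ i = 4) :
      IsCoxE8ThreeRel (of 0 * of 1 ^ i * of 0 * (of 1 ^ i)⁻¹ *
        (of 1 ^ i * of 0 * (of 1 ^ i)⁻¹ * of 0)⁻¹)
  | r₂ : IsCoxE8ThreeRel (of 1 ^ 8 * ((of 1 * of 0) ^ 7)⁻¹)
  | r₃ (i : ℕ) (h : i = 0 ∨ i = 1 ∨ i = 3 ∨ i = 4 ∨ i = 5 ∨ i = 6) :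
      IsCoxE8ThreeRel (of 2 * (of 1 ^ i * of 0 * (of 1 ^ i)⁻¹) *
        (of 1 ^ i * of 0 * (of 1 ^ i)⁻¹ * of 2)⁻¹)
  | r₄ : IsCoxE8ThreeRel (of 2 * (of 1 ^ 2 * of 0 * (of 1 ^ 2)⁻¹) * of 2 *
      (of 1 ^ 2 * of 0 * (of 1 ^ 2)⁻¹ * of 2 * (of 1 ^ 2 * of 0 * (of 1 ^ 2)⁻¹))⁻¹)
  | r₅ : IsCoxE8ThreeRel ((of 0 : FreeGroup (Fin 3)) ^ 2)
  | r₆ : IsCoxE8ThreeRel ((of 2 : FreeGroup (Fin 3)) ^ 2)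

section Group
variable {G : Type*} [Group G]

lemma commute_iff_mul_sq_eq_one {x y : G} (hx : x ^ 2 = 1) (hy : y ^ 2 = 1) :
    Commute x y ↔ (x * y) ^ 2 = 1 := by
  rw [sq] at hx hy
  rw [sq, mul_eq_one_iff_eq_inv, mul_inv_rev, inv_eq_of_mul_eq_one_right hx,
    inv_eq_of_mul_eq_one_right hy]
  rfl

lemma braid_iff_mul_pow_three_eq_one {x y : G} (hx : x ^ 2 = 1) (hy : y ^ 2 = 1) :
    x * y * x = y * x * y ↔ (x * y) ^ 3 = 1 := by
  rw [sq] at hx hy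
  rw [show (x * y) ^ 3 = x * y * x * (y * x * y) by simp only [pow_succ, pow_zero, one_mul,
    mul_assoc], mul_eq_one_iff_eq_inv, mul_inv_rev, mul_inv_rev, inv_eq_of_mul_eq_one_right hx,
    inv_eq_of_mul_eq_one_right hy]
  simp only [mul_assoc]

lemma pow_eq_mul_pow_iff {x c : G} {m n : ℕ} : c ^ m = (x * c) ^ n ↔ c ^ m = (c * x) ^ n := by
  calc c ^ m = (x * c) ^ n ↔ c * c ^ m = c * (x * c) ^ n := (mul_right_inj c).symm
    _ ↔ c ^ m * c = (c * x) ^ n * c := by rw [← mul_pow_mul, ← pow_succ, ← pow_succ']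
    _ ↔ c ^ m = (c * x) ^ n := mul_left_inj c

lemma braid_of_eq_mul_mul {x y r b : G} (hb : b = x * y * r) (hxr : Commute x r)
    (hyb : y * b = b * x) : x * y * x = y * x * y := by
  refine mul_right_cancel (b := r) ?_
  calc x * y * x * r = x * y * r * x := by simp only [mul_assoc, hxr.eq]
    _ = y * x * y * r := by rw [← hb, ← hyb, hb]; simp only [mul_assoc]

def conjPow (B A : G) (i : ℕ) : G := MulAut.conj (B ^ i) A

lemma conjPow_def (B A : G) (i : ℕ) : conjPow B A i = B ^ i * A * (B ^ i)⁻¹ := rfl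

@[simp] lemma conjPow_zero (B A : G) : conjPow B A 0 = A := by simp [conjPow]

lemma conjPow_add (B A : G) (i j : ℕ) :
    conjPow B A (i + j) = MulAut.conj (B ^ i) (conjPow B A j) := by
  simp [conjPow, pow_add, MulAut.mul_apply]

lemma conjPow_succ (B A : G) (i : ℕ) :
    conjPow B A (i + 1) = B * conjPow B A i * B⁻¹ := by
  simp only [conjPow_def]; group

def chainProd (a : ℕ → G) (n : ℕ) : G := (List.ofFn fun i : Fin n => a i).prod

@[simp] lemma chainProd_zero (a : ℕ → G) : chainProd a 0 = 1 := rfl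

lemma chainProd_succ (a : ℕ → G) (n : ℕ) : chainProd a (n + 1) = chainProd a n * a n := by
  rw [chainProd, chainProd, List.ofFn_succ', List.prod_concat]
  rfl

lemma chainProd_congr {a b : ℕ → G} {n : ℕ} (h : ∀ i < n, a i = b i) :
    chainProd a n = chainProd b n := by
  unfold chainProd
  congr 2
  exact funext fun i => h i i.2

lemma map_chainProd {H : Type*} [Group H] (f : G →* H) (a : ℕ → G) (n : ℕ) :
    f (chainProd a n) = chainProd (f ∘ a) n := by
  simp [chainProd, map_list_prod, List.map_ofFn, Function.comp_def]

lemma chainProd_conjPow_mul_pow (B A : G) (n : ℕ) :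
    chainProd (conjPow B A) n * B ^ n = (A * B) ^ n := by
  induction n with
  | zero => simp
  | succ n ih => rw [chainProd_succ, pow_succ (A * B), ← ih, conjPow_def]; group

end Group

section Chain
variable {G : Type*} [Group G] {a : ℕ → G} {n : ℕ}
  (hcomm : ∀ i j, i + 2 ≤ j → j < n → Commute (a i) (a j))
  (hbraid : ∀ i, i + 1 < n → a i * a (i + 1) * a i = a (i + 1) * a i * a (i + 1))

include hcomm in
lemma commute_chainProd {i m : ℕ} (hm : m < i) (hi : i < n) : Commute (a i) (chainProd a m) :=
  Commute.list_prod_right _ _ fun y hy => by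
    obtain ⟨j, rfl⟩ := (List.mem_ofFn' _ _).1 hy
    exact (hcomm j i (by omega) hi).symm

include hcomm hbraid in
lemma chainProd_mul_of_lt {j k : ℕ} (hjk : j + 1 < k) (hk : k ≤ n) :
    chainProd a k * a j = a (j + 1) * chainProd a k := by
  induction k with
  | zero => omega
  | succ k ih =>
    obtain hj | rfl : j + 1 < k ∨ j + 1 = k := by omega
    · rw [chainProd_succ, mul_assoc, ← (hcomm j k (by omega) (by omega)).eq, ← mul_assoc,
        ih hj (by omega), mul_assoc]
    · calc chainProd a (j + 2) * a j = chainProd a j * (a j * a (j + 1) * a j) := by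
            simp only [chainProd_succ, mul_assoc]
        _ = chainProd a j * a (j + 1) * (a j * a (j + 1)) := by
            rw [hbraid j (by omega)]; simp only [mul_assoc]
        _ = a (j + 1) * chainProd a (j + 2) := by
            rw [← (commute_chainProd hcomm (Nat.lt_succ_self j) (by omega)).eq]
            simp only [chainProd_succ, mul_assoc]

include hcomm hbraid in
lemma conjPow_chainProd {j : ℕ} (hj : j < n) : conjPow (chainProd a n) (a 0) j = a j := by
  induction j with
  | zero => exact conjPow_zero _ _
  | succ j ih =>
    rw [conjPow_succ, ih (by omega), chainProd_mul_of_lt hcomm hbraid hj le_rfl,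
      mul_inv_cancel_right]

include hcomm hbraid in
lemma chainProd_pow_succ : chainProd a n ^ (n + 1) = (chainProd a n * a 0) ^ n := by
  have h := chainProd_conjPow_mul_pow (chainProd a n) (a 0) n
  rw [chainProd_congr fun j hj => conjPow_chainProd hcomm hbraid hj, ← pow_succ'] at h
  exact pow_eq_mul_pow_iff.1 h

end Chain

section ConjPow
variable {G : Type*} [Group G] {A B : G} (hB : B ^ 8 = (B * A) ^ 7)
  (hA : ∀ d, 2 ≤ d → d ≤ 4 → Commute A (conjPow B A d))

include hB in
lemma commute_pow_eight : Commute A (B ^ 8) := by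
  have hB' : B ^ 8 = (A * B) ^ 7 := pow_eq_mul_pow_iff.2 hB
  calc A * B ^ 8 = A * (B * A) ^ 7 := by rw [hB]
    _ = (A * B) ^ 7 * A := (mul_pow_mul A B 7).symm
    _ = B ^ 8 * A := by rw [hB']

include hB in
lemma conjPow_add_eight (i : ℕ) : conjPow B A (i + 8) = conjPow B A i := by
  rw [conjPow_add, conjPow_def B A 8, ← (commute_pow_eight hB).eq, mul_inv_cancel_right]
  rfl

include hB in
lemma chainProd_conjPow_seven : chainProd (conjPow B A) 7 = B := by
  have h := chainProd_conjPow_mul_pow B A 7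
  rw [← pow_eq_mul_pow_iff.2 hB] at h
  exact mul_right_cancel (h.trans (pow_succ' B 7))

include hB hA in
lemma commute_conjPow {d : ℕ} (h2 : 2 ≤ d) (h6 : d ≤ 6) : Commute A (conjPow B A d) := by
  obtain h4 | h5 := le_or_gt d 4
  · exact hA d h2 h4
  · have h := ((hA (8 - d) (by omega) (by omega)).symm.map (MulAut.conj (B ^ d)))
    rw [← conjPow_add, show d + (8 - d) = 0 + 8 by omega, conjPow_add_eight hB,
      conjPow_zero] at h
    exact h

include hB hA in
lemma commute_conjPow_conjPow {i j : ℕ} (hij : i + 2 ≤ j) (hj : j ≤ i + 6) :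
    Commute (conjPow B A i) (conjPow B A j) := by
  obtain ⟨d, rfl⟩ : ∃ d, j = i + d := ⟨j - i, by omega⟩
  have h := (commute_conjPow hB hA (d := d) (by omega) (by omega)).map (MulAut.conj (B ^ i))
  rwa [← conjPow_add] at h

include hB hA in
lemma conjPow_braid (i : ℕ) :
    conjPow B A i * conjPow B A (i + 1) * conjPow B A i =
      conjPow B A (i + 1) * conjPow B A i * conjPow B A (i + 1) := by
  have h0 : conjPow B A 0 * conjPow B A 1 * conjPow B A 0 =
      conjPow B A 1 * conjPow B A 0 * conjPow B A 1 := by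
    rw [conjPow_zero]
    refine braid_of_eq_mul_mul (b := B)
      (r := conjPow B A 2 * conjPow B A 3 * conjPow B A 4 * conjPow B A 5 * conjPow B A 6)
      ?_ ?_ (by rw [conjPow_def, pow_one, inv_mul_cancel_right])
    · conv_lhs => rw [← chainProd_conjPow_seven hB]
      simp only [chainProd_succ, chainProd_zero, conjPow_zero, one_mul, mul_assoc]
    · have hc {d : ℕ} (h2 : 2 ≤ d) (h6 : d ≤ 6) := commute_conjPow hB hA h2 h6
      exact ((((hc le_rfl (by norm_num)).mul_right (hc (by norm_num) (by norm_num))).mul_right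
        (hc (by norm_num) (by norm_num))).mul_right (hc (by norm_num) (by norm_num))).mul_right
        (hc (by norm_num) le_rfl)
  simpa only [map_mul, ← conjPow_add, add_zero] using congrArg (MulAut.conj (B ^ i)) h0

end ConjPow

@[simp] lemma _root_.PresentedGroup.mk_of {α : Type*} {rels : Set (FreeGroup α)} (x : α) :
    PresentedGroup.mk rels (FreeGroup.of x) = PresentedGroup.of x := rfl

abbrev CoxE8 := PresentedGroup {r | IsCoxE8Rel r}
abbrev CoxE8Three := PresentedGroup {r | IsCoxE8ThreeRel r}

namespace CoxE8

open PresentedGroup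

/-- `s i` is the generator `sᵢ₊₁`, with `i` read modulo 7. -/
def s (i : ℕ) : CoxE8 := of (.inl (Fin.ofNat 7 i))
def t : CoxE8 := of (.inr ())

lemma mk_eq_one {r : FreeGroup (Fin 7 ⊕ Unit)} (h : IsCoxE8Rel r) : mk {r | IsCoxE8Rel r} r = 1 :=
  one_of_mem h

lemma s_eq {i : ℕ} (hi : i < 7) : s i = of (.inl ⟨i, hi⟩) := by
  rw [s]
  congr 2
  exact Fin.ext (Nat.mod_eq_of_lt hi)

lemma s_sq (i : ℕ) : s i ^ 2 = 1 := by
  simpa only [s, map_pow, mk_of] using mk_eq_one (IsCoxE8Rel.sq (Fin.ofNat 7 i))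

lemma t_sq : t ^ 2 = 1 := by
  simpa [t] using mk_eq_one IsCoxE8Rel.t_sq

lemma s_commute (i j : ℕ) (hij : i + 2 ≤ j) (hj : j < 7) : Commute (s i) (s j) := by
  rw [commute_iff_mul_sq_eq_one (s_sq i) (s_sq j), s_eq (by omega), s_eq hj]
  simpa using mk_eq_one (IsCoxE8Rel.comm_ss ⟨i, by omega⟩ ⟨j, hj⟩ (by simpa using by omega))

lemma s_braid (i : ℕ) (hi : i + 1 < 7) : s i * s (i + 1) * s i = s (i + 1) * s i * s (i + 1) := by
  rw [braid_iff_mul_pow_three_eq_one (s_sq i) (s_sq (i + 1)), s_eq (by omega), s_eq hi]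
  simpa using mk_eq_one (IsCoxE8Rel.braid_s i hi)

lemma t_commute {i : ℕ} (hi : i < 7) (h2 : i ≠ 2) : Commute t (s i) := by
  rw [commute_iff_mul_sq_eq_one t_sq (s_sq i), s_eq hi]
  simpa [t] using mk_eq_one (IsCoxE8Rel.comm_t ⟨i, hi⟩ h2)

lemma t_braid : t * s 2 * t = s 2 * t * s 2 := by
  rw [braid_iff_mul_pow_three_eq_one t_sq (s_sq 2), s_eq (by norm_num)]
  simpa [t] using mk_eq_one IsCoxE8Rel.braid_t

lemma conjPow_chainProd_s {i : ℕ} (hi : i < 7) : conjPow (chainProd s 7) (s 0) i = s i :=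
  conjPow_chainProd s_commute s_braid hi

end CoxE8

namespace CoxE8Three

open PresentedGroup

def σ₁ : CoxE8Three := of 0
def σ : CoxE8Three := of 1
def ω : CoxE8Three := of 2

lemma mk_eq_one {r : FreeGroup (Fin 3)} (h : IsCoxE8ThreeRel r) :
    mk {r | IsCoxE8ThreeRel r} r = 1 :=
  one_of_mem h

lemma σ₁_sq : σ₁ ^ 2 = 1 := by
  simpa [σ₁] using mk_eq_one IsCoxE8ThreeRel.r₅

lemma ω_sq : ω ^ 2 = 1 := by
  simpa [ω] using mk_eq_one IsCoxE8ThreeRel.r₆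

lemma σ_pow_eight : σ ^ 8 = (σ * σ₁) ^ 7 := by
  simpa [σ, σ₁, mul_inv_eq_one] using mk_eq_one IsCoxE8ThreeRel.r₂

lemma σ₁_commute (d : ℕ) (h2 : 2 ≤ d) (h4 : d ≤ 4) : Commute σ₁ (conjPow σ σ₁ d) := by
  have h := mk_eq_one (IsCoxE8ThreeRel.r₁ d (by omega))
  simp only [map_mul, map_pow, map_inv, mk_of, mul_inv_eq_one] at h
  rw [Commute, SemiconjBy, conjPow_def]
  simpa only [σ₁, σ, mul_assoc] using h

lemma ω_commute {i : ℕ} (hi : i < 7) (h2 : i ≠ 2) : Commute ω (conjPow σ σ₁ i) := by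
  have h := mk_eq_one (IsCoxE8ThreeRel.r₃ i (by omega))
  simp only [map_mul, map_pow, map_inv, mk_of, mul_inv_eq_one] at h
  exact h

lemma ω_braid : ω * conjPow σ σ₁ 2 * ω = conjPow σ σ₁ 2 * ω * conjPow σ σ₁ 2 := by
  have h := mk_eq_one IsCoxE8ThreeRel.r₄
  simp only [map_mul, map_pow, map_inv, mk_of, mul_inv_eq_one] at h
  exact h

end CoxE8Three

open PresentedGroup CoxE8 CoxE8Three

lemma lift_three_rel_eq_one :
    ∀ r ∈ {r | IsCoxE8ThreeRel r}, FreeGroup.lift ![s 0, chainProd s 7, t] r = 1 := by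
  have hconj {i : ℕ} (hi : i < 7) := conjPow_chainProd_s hi
  intro r hr
  induction hr <;>
    simp only [map_mul, map_pow, map_inv, FreeGroup.lift_apply_of, Matrix.cons_val_zero,
      Matrix.cons_val_one, Matrix.cons_val_two, mul_inv_eq_one]
  case r₁ i h =>
    have := (s_commute 0 i (by omega) (by omega)).eq
    rw [← hconj (i := i) (by omega), conjPow_def] at this
    simpa only [mul_assoc] using this
  case r₂ => exact chainProd_pow_succ s_commute s_braid
  case r₃ i h =>
    rw [← conjPow_def, hconj (i := i) (by omega)]
    exact t_commute (by omega) (by omega)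
  case r₄ =>
    rw [← conjPow_def, hconj (by omega)]
    exact t_braid
  case r₅ => exact s_sq 0
  case r₆ => exact t_sq

lemma lift_rel_eq_one : ∀ r ∈ {r | IsCoxE8Rel r},
    FreeGroup.lift (Sum.elim (fun i : Fin 7 => conjPow σ σ₁ i) fun _ => ω) r = 1 := by
  have hsq (i : ℕ) : conjPow σ σ₁ i ^ 2 = 1 := by rw [conjPow, ← map_pow, σ₁_sq, map_one]
  intro r hr
  induction hr <;>
    simp only [map_mul, map_pow, FreeGroup.lift_apply_of, Sum.elim_inl, Sum.elim_inr]
  case sq i => exact hsq i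
  case t_sq => exact ω_sq
  case comm_ss i j h =>
    exact (commute_iff_mul_sq_eq_one (hsq i) (hsq j)).1
      (commute_conjPow_conjPow σ_pow_eight σ₁_commute (by omega) (by omega))
  case braid_s i h =>
    exact (braid_iff_mul_pow_three_eq_one (hsq i) (hsq (i + 1))).1
      (conjPow_braid σ_pow_eight σ₁_commute i)
  case comm_t i h => exact (commute_iff_mul_sq_eq_one ω_sq (hsq i)).1 (ω_commute i.isLt h)
  case braid_t => exact (braid_iff_mul_pow_three_eq_one ω_sq (hsq 2)).1 ω_braid

def fromThree : CoxE8Three →* CoxE8 := toGroup lift_three_rel_eq_one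
def toThree : CoxE8 →* CoxE8Three := toGroup lift_rel_eq_one

lemma fromThree_σ₁ : fromThree σ₁ = s 0 := toGroup.of _
lemma fromThree_σ : fromThree σ = chainProd s 7 := toGroup.of _
lemma fromThree_ω : fromThree ω = t := toGroup.of _

lemma toThree_s {i : ℕ} (hi : i < 7) : toThree (s i) = conjPow σ σ₁ i := by
  rw [s_eq hi]
  exact toGroup.of _

lemma toThree_t : toThree t = ω := toGroup.of _

lemma map_conjPow {G H : Type*} [Group G] [Group H] (f : G →* H) (B A : G) (i : ℕ) :
    f (conjPow B A i) = conjPow (f B) (f A) i := by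
  simp only [conjPow_def, map_mul, map_pow, map_inv]

lemma toThree_comp_fromThree : toThree.comp fromThree = MonoidHom.id _ := by
  refine PresentedGroup.ext fun x => ?_
  fin_cases x
  · change toThree (fromThree σ₁) = σ₁
    rw [fromThree_σ₁, toThree_s (by norm_num), conjPow_zero]
  · change toThree (fromThree σ) = σ
    rw [fromThree_σ, map_chainProd, chainProd_congr (a := toThree ∘ s) fun _ hi => toThree_s hi,
      chainProd_conjPow_seven σ_pow_eight]
  · change toThree (fromThree ω) = ω
    rw [fromThree_ω, toThree_t]

lemma fromThree_comp_toThree : fromThree.comp toThree = MonoidHom.id _ := by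
  refine PresentedGroup.ext fun x => ?_
  rcases x with i | _
  · rw [MonoidHom.comp_apply, MonoidHom.id_apply, ← s_eq i.isLt, toThree_s i.isLt, map_conjPow,
      fromThree_σ, fromThree_σ₁, conjPow_chainProd_s i.isLt]
  · exact fromThree_ω

/-- The Coxeter group of type `E₈` admits the three-generator presentation with
generators `σ₁, σ, ω`, the isomorphism sending `σ₁ ↦ s₁`, `σ ↦ s₁s₂⋯s₇`, `ω ↦ t`. -/
theorem three_generator_presentation_of_coxeter_E8 :
    ∃ e : PresentedGroup {r | IsCoxE8ThreeRel r} ≃* PresentedGroup {r | IsCoxE8Rel r},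
      e (.of 0) = PresentedGroup.of (Sum.inl 0) ∧
      e (.of 2) = PresentedGroup.of (Sum.inr ()) ∧
      e (.of 1) = (List.ofFn (fun i : Fin 7 =>
        (PresentedGroup.of (Sum.inl i) : PresentedGroup {r | IsCoxE8Rel r}))).prod := by
  refine ⟨fromThree.toMulEquiv toThree toThree_comp_fromThree fromThree_comp_toThree,
    fromThree_σ₁, fromThree_ω, fromThree_σ.trans ?_⟩
  unfold chainProd
  congr
  exact funext fun i => s_eq i.isLt

end CoxeterE8
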